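/- For every positive integer k, the function f_k(x) = Σ_{i=0}^{k-1} (k-i)·x^i/i! - x·e^x has exactly one root in the open interval (0, ∞). -/

import Mathlib

/-!
Multiplying by `e^{-x}` does not change the roots, so it suffices to study
`g(x) = P_k(x) e^{-x} - x` with `P_k(x) = ∑_{i<k} (k-i) x^i / i!`. Differentiating term by term
gives `P_k' = P_{k-1}`, and `P_{k-1} ≤ P_k` on `[0, ∞)`, so `g' = (P_{k-1} - P_k) e^{-x} - 1 < 0`
there. Moreover `g(0) = k > 0`, while `P_k(x) ≤ k e^x` forces `g(k) ≤ 0`.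
-/

open Real Set Finset Nat

theorem hasDerivAt_sum_range_mul_pow_div_factorial (c : ℕ → ℝ) (n : ℕ) (x : ℝ) :
    HasDerivAt (fun y => ∑ i ∈ range (n + 1), c i * y ^ i / i !)
      (∑ i ∈ range n, c (i + 1) * x ^ i / i !) x := by
  have hterm : ∀ i ∈ range (n + 1), HasDerivAt (fun y => c i * y ^ i / i !)
      (c i * (i * x ^ (i - 1)) / i !) x :=
    fun i _ => ((hasDerivAt_pow i x).const_mul (c i)).div_const _
  refine (HasDerivAt.fun_sum hterm).congr_deriv ?_
  rw [sum_range_succ']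
  simp only [CharP.cast_eq_zero, zero_mul, mul_zero, zero_div, add_zero, add_tsub_cancel_right,
    factorial_succ, cast_mul, cast_succ]
  refine sum_congr rfl fun i _ => ?_
  field_simp

noncomputable def weightedExpSum (k : ℕ) (x : ℝ) : ℝ :=
  ∑ i ∈ range k, ((k - i : ℕ) : ℝ) * x ^ i / i !

@[fun_prop]
theorem continuous_weightedExpSum (k : ℕ) : Continuous (weightedExpSum k) := by
  unfold weightedExpSum
  fun_prop

theorem hasDerivAt_weightedExpSum (k : ℕ) (x : ℝ) :
    HasDerivAt (weightedExpSum k) (weightedExpSum (k - 1) x) x := by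
  cases k with
  | zero =>
    rw [show weightedExpSum 0 = fun _ => 0 from funext fun _ => sum_range_zero _]
    exact hasDerivAt_const x _
  | succ n =>
    have h := hasDerivAt_sum_range_mul_pow_div_factorial (fun i => ((n + 1 - i : ℕ) : ℝ)) n x
    simp only [Nat.add_sub_add_right] at h
    exact h

theorem weightedExpSum_apply_zero (k : ℕ) : weightedExpSum k 0 = k := by
  cases k with
  | zero => simp [weightedExpSum]
  | succ n => simp [weightedExpSum, sum_range_succ']

theorem weightedExpSum_pred_le {x : ℝ} (hx : 0 ≤ x) (k : ℕ) :
    weightedExpSum (k - 1) x ≤ weightedExpSum k x := by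
  cases k with
  | zero => rfl
  | succ n =>
    rw [weightedExpSum, weightedExpSum, add_tsub_cancel_right, sum_range_succ]
    refine le_add_of_le_of_nonneg (sum_le_sum fun i _ => ?_) (by positivity)
    gcongr
    omega

theorem weightedExpSum_le_mul_exp {x : ℝ} (hx : 0 ≤ x) (k : ℕ) :
    weightedExpSum k x ≤ k * exp x :=
  calc weightedExpSum k x ≤ ∑ i ∈ range k, (k : ℝ) * (x ^ i / i !) := by
        refine sum_le_sum fun i _ => ?_
        rw [mul_div_assoc]
        gcongr
        exact_mod_cast Nat.sub_le k i
    _ = k * ∑ i ∈ range k, x ^ i / i ! := (mul_sum _ _ _).symm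
    _ ≤ k * exp x := by gcongr; exact sum_le_exp_of_nonneg hx k

theorem strictAntiOn_weightedExpSum_mul_exp_neg_sub (k : ℕ) :
    StrictAntiOn (fun x => weightedExpSum k x * exp (-x) - x) (Ici 0) := by
  refine strictAntiOn_of_hasDerivWithinAt_neg (convex_Ici 0)
    (f' := fun x => (weightedExpSum (k - 1) x - weightedExpSum k x) * exp (-x) - 1)
    (by fun_prop) (fun x _ => ?_) (fun x hx => ?_)
  · have h := ((hasDerivAt_weightedExpSum k x).mul (hasDerivAt_neg x).exp).sub (hasDerivAt_id x)
    exact (h.congr_deriv (by ring)).hasDerivWithinAt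
  · rw [interior_Ici] at hx
    have := mul_nonpos_of_nonpos_of_nonneg (sub_nonpos.2 (weightedExpSum_pred_le hx.le k))
      (exp_pos (-x)).le
    linarith

theorem weightedExpSum_sub_mul_exp_eq_zero_iff (k : ℕ) (x : ℝ) :
    weightedExpSum k x - x * exp x = 0 ↔ weightedExpSum k x * exp (-x) - x = 0 := by
  have h : weightedExpSum k x * exp (-x) - x = exp (-x) * (weightedExpSum k x - x * exp x) := by
    rw [exp_neg]
    field_simp
  rw [h, mul_eq_zero_iff_left (exp_ne_zero _)]

theorem existsUnique_mem_Ioi_eq_zero_of_strictAntiOn {g : ℝ → ℝ} {a b : ℝ} (hab : a ≤ b)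
    (hcont : ContinuousOn g (Icc a b)) (hanti : StrictAntiOn g (Ici a)) (ha : 0 < g a)
    (hb : g b ≤ 0) : ∃! x, x ∈ Ioi a ∧ g x = 0 := by
  obtain ⟨x, hx, hgx⟩ := intermediate_value_Icc' hab hcont ⟨hb, ha.le⟩
  have hxa : a < x := hx.1.lt_of_ne (by rintro rfl; exact ha.ne' hgx)
  refine ⟨x, ⟨hxa, hgx⟩, fun y ⟨hya, hgy⟩ => ?_⟩
  exact hanti.injOn (mem_Ici.2 hya.le) (mem_Ici.2 hxa.le) (hgy.trans hgx.symm)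

/-- For every positive integer `k`, the function
`f_k(x) = ∑_{i=0}^{k-1} (k-i) x^i / i! - x e^x` has exactly one root in `(0, ∞)`. -/
theorem stmt_4 (k : ℕ) (hk : 0 < k) :
    ∃! x : ℝ, x ∈ Set.Ioi (0 : ℝ) ∧
      (∑ i ∈ Finset.range k, ((k - i : ℕ) : ℝ) * x ^ i / (Nat.factorial i))
        - x * Real.exp x = 0 := by
  change ∃! x : ℝ, x ∈ Set.Ioi 0 ∧ weightedExpSum k x - x * exp x = 0
  simp_rw [weightedExpSum_sub_mul_exp_eq_zero_iff]
  refine existsUnique_mem_Ioi_eq_zero_of_strictAntiOn k.cast_nonneg (by fun_prop)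
    (strictAntiOn_weightedExpSum_mul_exp_neg_sub k) ?_ ?_
  · simpa [weightedExpSum_apply_zero] using hk
  · have h := mul_le_mul_of_nonneg_right (weightedExpSum_le_mul_exp k.cast_nonneg k)
      (exp_pos (-(k : ℝ))).le
    rw [mul_assoc, ← exp_add, add_neg_cancel, exp_zero, mul_one] at h
    simpa using h
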